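/- For every (r, r′) ∈ ℂ² and every admissible solution t for (r, r′), there exist a constant C > 0 and M ∈ ℕ such that |t(α, α′)| ≤ C·(1+α)^M for all α, α′ ∈ ℕ. -/

import Mathlib

noncomputable section

/-- ρ = (n-1)/2 as a complex number. -/
def rho (n : ℕ) : ℂ := ((n : ℂ) - 1) / 2

/-- ρ' = (n-2)/2 as a complex number. -/
def rho' (n : ℕ) : ℂ := ((n : ℂ) - 2) / 2

/-- A diagonal sequence for `(r, r')`. -/
def IsDiagSeq (n : ℕ) (r r' : ℂ) (s : ℕ → ℂ) : Prop :=
  ∀ α : ℕ, (2*r' + 2*(α : ℂ) + (n : ℂ) - 2) * s α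
    = (2*r + 2*(α : ℂ) + (n : ℂ) - 1) * s (α + 1)

/-- L_even. -/
def Leven (n : ℕ) : Set (ℂ × ℂ) :=
  {p | ∃ i j : ℕ, p.1 = -rho n - (i : ℂ) ∧ p.2 = -rho' n - (j : ℂ) ∧ ∃ k : ℕ, i = j + 2*k}

/-- L_odd. -/
def Lodd (n : ℕ) : Set (ℂ × ℂ) :=
  {p | ∃ i j : ℕ, p.1 = -rho n - (i : ℂ) ∧ p.2 = -rho' n - (j : ℂ) ∧ ∃ k : ℕ, i = j + 2*k + 1}

/-- An admissible solution `t : ℕ × ℕ → ℂ` for `(r, r')`: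
`t(α,α') = 0` when `α' > α` or `α − α'` is odd (equivalently `α + α'` is odd),
and the relations (R1), (R2) hold for all `α ≥ α'` with `α − α'` even.
The natural-subtraction index `α - 1` is harmless, since in (R1) its coefficient
`(α − α')` vanishes when `α = α'`, and in (R2) we have `α ≥ α' ≥ 1`. -/
def IsAdmissible (n : ℕ) (r r' : ℂ) (t : ℕ → ℕ → ℂ) : Prop :=
  (∀ α α' : ℕ, (α < α' ∨ Odd (α + α')) → t α α' = 0) ∧
  (∀ α α' : ℕ, α' ≤ α → Even (α + α') →
    ((2*(α : ℂ) + (n : ℂ) - 2) * (2*r' + 2*(α' : ℂ) + (n : ℂ) - 2) * t α α'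
      = ((α : ℂ) + (α' : ℂ) + (n : ℂ) - 2) * (2*r + 2*(α : ℂ) + (n : ℂ) - 1)
          * t (α + 1) (α' + 1)
        + ((α : ℂ) - (α' : ℂ)) * (2*r - 2*(α : ℂ) - (n : ℂ) + 3)
          * t (α - 1) (α' + 1)) ∧
    (1 ≤ α' →
      (2*(α : ℂ) + (n : ℂ) - 2) * (2*r' - 2*(α' : ℂ) - (n : ℂ) + 4) * t α α'
      = ((α : ℂ) - (α' : ℂ) + 1) * (2*r + 2*(α : ℂ) + (n : ℂ) - 1)
          * t (α + 1) (α' - 1)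
        + ((α : ℂ) + (α' : ℂ) + (n : ℂ) - 3) * (2*r - 2*(α : ℂ) - (n : ℂ) + 3)
          * t (α - 1) (α' - 1)))

/-!
Let `u σ` be the largest `‖t α α'‖` on the antidiagonal `α + α' = σ`. For large `σ`, (R1) at
`(α, α')` expresses `t (α + 1) (α' + 1)` through two entries of the antidiagonal `σ`, and (R2) at
`(σ + 1, 1)` expresses `t (σ + 2) 0` through `t σ 0` and `t (σ + 1) 1`, which (R1) has already
bounded. In both cases the other coefficients add up to at most `1 + O(1/σ)` times the leading one,
uniformly in `α'`, so `u (σ + 2) ≤ (1 + 2K/(σ + 1)) u σ` for a fixed `K`. Since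
`(σ + 1) ^ K (1 + 2K/(σ + 1)) ≤ (σ + 3) ^ K` by Bernoulli's inequality, `u σ = O(σ ^ K)`.
-/

open Finset

theorem pow_mul_one_add_le_add_two_pow {x : ℝ} (hx : 0 < x) (K : ℕ) :
    x ^ K * (1 + 2 * K / x) ≤ (x + 2) ^ K := by
  have hB : 1 + K * (2 / x) ≤ (1 + 2 / x) ^ K :=
    one_add_mul_le_pow (by linarith [show 0 < 2 / x by positivity]) K
  calc x ^ K * (1 + 2 * K / x) = x ^ K * (1 + K * (2 / x)) := by ring
    _ ≤ x ^ K * (1 + 2 / x) ^ K := by gcongr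
    _ = (x + 2) ^ K := by rw [← mul_pow, mul_one_add, mul_div_cancel₀ _ hx.ne']

theorem exists_pow_bound_of_le_one_add_div {u : ℕ → ℝ} {K S : ℕ}
    (hu : ∀ σ ≥ S, u (σ + 2) ≤ (1 + 2 * K / (σ + 1)) * u σ) :
    ∃ C, 0 < C ∧ ∀ σ, u σ ≤ C * (σ + 1) ^ K := by
  obtain ⟨C, hC, hbase⟩ : ∃ C : ℝ, 0 < C ∧ ∀ σ ≤ S + 1, u σ ≤ C := by
    refine ⟨1 + ∑ σ ∈ range (S + 2), |u σ|, by positivity, fun σ hσ ↦ ?_⟩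
    have := single_le_sum (f := fun σ ↦ |u σ|) (fun _ _ ↦ abs_nonneg _)
      (mem_range.2 (Nat.lt_succ_of_le hσ))
    linarith [le_abs_self (u σ)]
  refine ⟨C, hC, fun σ ↦ ?_⟩
  induction σ using Nat.strong_induction_on with
  | _ σ ih =>
    rcases le_or_gt σ (S + 1) with hσ | hσ
    · calc u σ ≤ C := hbase σ hσ
        _ ≤ C * (σ + 1) ^ K := le_mul_of_one_le_right hC.le (one_le_pow₀ (by linarith))
    · obtain ⟨σ, rfl⟩ : ∃ τ, σ = τ + 2 := ⟨σ - 2, by omega⟩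
      have hpos : (0 : ℝ) < σ + 1 := by positivity
      calc u (σ + 2) ≤ (1 + 2 * K / (σ + 1)) * u σ := hu σ (by omega)
        _ ≤ (1 + 2 * K / (σ + 1)) * (C * (σ + 1) ^ K) := by gcongr; exact ih σ (by omega)
        _ = C * ((σ + 1) ^ K * (1 + 2 * K / (σ + 1))) := by ring
        _ ≤ C * ((σ + 2 : ℕ) + 1) ^ K := by
          gcongr
          exact (pow_mul_one_add_le_add_two_pow hpos K).trans_eq (by push_cast; ring)

theorem norm_le_div_of_mul_eq_sub {𝕜 : Type*} [NormedDivisionRing 𝕜] {D T E₁ Y E₂ Z : 𝕜}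
    {d e₁ e₂ y z : ℝ} (hd : 0 < d) (hD : d ≤ ‖D‖) (hE₁ : ‖E₁‖ ≤ e₁) (hE₂ : ‖E₂‖ ≤ e₂)
    (hY : ‖Y‖ ≤ y) (hZ : ‖Z‖ ≤ z) (h : D * T = E₁ * Y - E₂ * Z) :
    ‖T‖ ≤ (e₁ * y + e₂ * z) / d := by
  rw [le_div_iff₀ hd]
  calc ‖T‖ * d ≤ ‖D * T‖ := by rw [norm_mul, mul_comm]; gcongr
    _ ≤ ‖E₁‖ * ‖Y‖ + ‖E₂‖ * ‖Z‖ := by rw [h, ← norm_mul, ← norm_mul]; exact norm_sub_le _ _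
    _ ≤ e₁ * y + e₂ * z := by
      gcongr
      · exact (norm_nonneg _).trans hE₁
      · exact (norm_nonneg _).trans hE₂

namespace Complex

theorem norm_eq_of_eq_ofReal {w : ℂ} {x : ℝ} (hx : 0 ≤ x) (h : w = x) : ‖w‖ = x :=
  h ▸ Complex.norm_of_nonneg hx

theorem sub_norm_le_norm_of_eq_add_ofReal {w z : ℂ} {x : ℝ} (h : w = z + x) :
    x - ‖z‖ ≤ ‖w‖ := by
  subst h
  have := norm_sub_le (z + x) z
  rw [add_sub_cancel_left, norm_real, Real.norm_eq_abs] at this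
  linarith [le_abs_self x]

theorem norm_le_of_eq_add_ofReal {w z : ℂ} {x a : ℝ} (h : w = z + x) (hx : |x| ≤ a) :
    ‖w‖ ≤ ‖z‖ + a :=
  calc ‖w‖ ≤ ‖z‖ + ‖(x : ℂ)‖ := h ▸ norm_add_le _ _
    _ ≤ ‖z‖ + a := by rwa [norm_real, Real.norm_eq_abs, add_le_add_iff_left]

end Complex

section Coefficients

variable {n : ℕ} {r : ℂ} {A : ℝ} (hn : 2 ≤ n) (hr : ‖2 * r‖ + n ≤ A) (p : ℕ)
include hn hr

theorem two_mul_sub_le_norm_two_mul_add_two_mul : 2 * p - A ≤ ‖2 * r + 2 * (p : ℂ) + n - 1‖ :=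
  have : (2 : ℝ) ≤ n := by exact_mod_cast hn
  (Complex.sub_norm_le_norm_of_eq_add_ofReal (z := 2 * r) (x := 2 * p + n - 1)
    (by push_cast; ring)).trans'
    (by linarith)

theorem norm_two_mul_sub_two_mul_le : ‖2 * r - 2 * (p : ℂ) - n + 3‖ ≤ 2 * p + A :=
  have : (2 : ℝ) ≤ n := by exact_mod_cast hn
  (Complex.norm_le_of_eq_add_ofReal (z := 2 * r) (x := -(2 * p + n - 3)) (a := 2 * p + n)
    (by push_cast; ring) (abs_le.2 ⟨by linarith, by linarith⟩)).trans (by linarith)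

theorem norm_two_mul_natCast_add_le : ‖2 * (p : ℂ) + n - 2‖ ≤ 2 * p + A := by
  have : (2 : ℝ) ≤ n := by exact_mod_cast hn
  rw [Complex.norm_eq_of_eq_ofReal (x := 2 * p + n - 2) (by linarith) (by push_cast; ring)]
  linarith [norm_nonneg (2 * r)]

end Coefficients

namespace IsAdmissible

variable {n : ℕ} {r r' : ℂ} {t : ℕ → ℕ → ℂ} {A : ℝ}

theorem norm_succ_succ_le (ht : IsAdmissible n r r' t) (hn : 3 ≤ n) (hr : ‖2 * r‖ + n ≤ A)
    (hr' : ‖2 * r'‖ + n ≤ A) {p q : ℕ} (hqp : q ≤ p) (hpq : Even (p + q)) (hp : 1 ≤ p)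
    (hAp : A ≤ p) {B : ℝ} (hB : ∀ α α', α + α' = p + q → ‖t α α'‖ ≤ B) :
    ‖t (p + 1) (q + 1)‖ ≤ (1 + 8 * A / (p + q + 1)) * B := by
  have hn' : (3 : ℝ) ≤ n := by exact_mod_cast hn
  have hqp' : (q : ℝ) ≤ p := by exact_mod_cast hqp
  have hp' : (1 : ℝ) ≤ p := by exact_mod_cast hp
  have hA : 0 ≤ A := by linarith [norm_nonneg (2 * r)]
  have hB0 : 0 ≤ B := (norm_nonneg _).trans (hB p q rfl)
  have hd : 0 < (p + q + 1) * (2 * p - A) := by nlinarith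
  have hD : (p + q + 1) * (2 * p - A) ≤ ‖((p : ℂ) + q + n - 2) * (2 * r + 2 * p + n - 1)‖ := by
    rw [norm_mul,
      Complex.norm_eq_of_eq_ofReal (x := p + q + n - 2) (by linarith) (by push_cast; ring)]
    exact mul_le_mul (by linarith) (two_mul_sub_le_norm_two_mul_add_two_mul (by omega) hr p)
      (by linarith) (by linarith)
  have hE₁ : ‖(2 * (p : ℂ) + n - 2) * (2 * r' + 2 * q + n - 2)‖ ≤ (2 * p + A) * (2 * q + A) :=
    norm_mul_le_of_le (norm_two_mul_natCast_add_le (by omega) hr p)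
      ((Complex.norm_le_of_eq_add_ofReal (z := 2 * r') (x := 2 * q + n - 2)
        (by push_cast; ring) (abs_le.2 ⟨by linarith, le_rfl⟩)).trans (by linarith))
  have hE₂ : ‖((p : ℂ) - q) * (2 * r - 2 * p - n + 3)‖ ≤ (p - q) * (2 * p + A) :=
    norm_mul_le_of_le
      (Complex.norm_eq_of_eq_ofReal (x := p - q) (by linarith) (by push_cast; ring)).le
      (norm_two_mul_sub_two_mul_le (by omega) hr p)
  refine (norm_le_div_of_mul_eq_sub hd hD hE₁ hE₂ (hB p q rfl) (hB (p - 1) (q + 1) (by omega))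
    (by linear_combination -(ht.2 p q hqp hpq).1)).trans ?_
  rw [div_le_iff₀ hd]
  calc _ = (2 * p + A) * (p + q + A) * B := by ring
    _ ≤ (p + q + 1 + 8 * A) * (2 * p - A) * B := by
      refine mul_le_mul_of_nonneg_right ?_ hB0
      nlinarith [mul_nonneg hA (sub_nonneg.2 hAp), mul_nonneg hA (sub_nonneg.2 hqp')]
    _ = _ := by field_simp

theorem norm_succ_zero_le (ht : IsAdmissible n r r' t) (hn : 3 ≤ n) (hr : ‖2 * r‖ + n ≤ A)
    (hr' : ‖2 * r'‖ + n ≤ A) {p : ℕ} (hp : Odd p) (hAp : 4 * A ≤ p) {B : ℝ}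
    (hY : ‖t p 1‖ ≤ (1 + 8 * A / p) * B) (hZ : ‖t (p - 1) 0‖ ≤ B) :
    ‖t (p + 1) 0‖ ≤ (1 + 8 * A / p) * B := by
  have hn' : (3 : ℝ) ≤ n := by exact_mod_cast hn
  have hp' : (1 : ℝ) ≤ p := by exact_mod_cast hp.pos
  have hA : 0 ≤ A := by linarith [norm_nonneg (2 * r)]
  have hB0 : 0 ≤ B := (norm_nonneg _).trans hZ
  have hd : 0 < p * (2 * p - A) := by nlinarith
  have hD : p * (2 * p - A) ≤ ‖(p : ℂ) * (2 * r + 2 * p + n - 1)‖ := by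
    rw [norm_mul, Complex.norm_natCast]
    exact mul_le_mul_of_nonneg_left (two_mul_sub_le_norm_two_mul_add_two_mul (by omega) hr p)
      (by linarith)
  have hE₁ : ‖(2 * (p : ℂ) + n - 2) * (2 * r' - 2 - n + 4)‖ ≤ (2 * p + A) * A :=
    norm_mul_le_of_le (norm_two_mul_natCast_add_le (by omega) hr p)
      ((Complex.norm_le_of_eq_add_ofReal (z := 2 * r') (x := 2 - n) (a := n)
        (by push_cast; ring) (abs_le.2 ⟨by linarith, by linarith⟩)).trans (by linarith))
  have hE₂ : ‖((p : ℂ) + 1 + n - 3) * (2 * r - 2 * p - n + 3)‖ ≤ (p + A) * (2 * p + A) :=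
    norm_mul_le_of_le
      ((Complex.norm_eq_of_eq_ofReal (x := p + n - 2) (by linarith) (by push_cast; ring)).trans_le
        (by linarith [norm_nonneg (2 * r)]))
      (norm_two_mul_sub_two_mul_le (by omega) hr p)
  have hrel := (ht.2 p 1 hp.pos (by simpa [Nat.even_add_one] using hp)).2 le_rfl
  simp only [Nat.sub_self, Nat.cast_one] at hrel
  refine (norm_le_div_of_mul_eq_sub hd hD hE₁ hE₂ hY hZ (by linear_combination -hrel)).trans ?_
  rw [div_le_iff₀ hd]
  have key : (2 * p + A) * A * (1 + 8 * A / p) + (p + A) * (2 * p + A) ≤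
      (1 + 8 * A / p) * (p * (2 * p - A)) := by
    have hgap : (1 + 8 * A / p) * (p * (2 * p - A)) -
        ((2 * p + A) * A * (1 + 8 * A / p) + (p + A) * (2 * p + A)) =
        (10 * p ^ 2 * A - 26 * p * A ^ 2 - 8 * A ^ 3) / p := by
      field_simp; ring
    rw [← sub_nonneg, hgap]
    refine div_nonneg ?_ (by linarith)
    nlinarith [mul_nonneg hA (sub_nonneg.2 hAp), mul_nonneg (mul_nonneg hA hA) (sub_nonneg.2 hAp)]
  nlinarith [mul_le_mul_of_nonneg_right key hB0]

theorem norm_le_of_forall_antidiagonal (ht : IsAdmissible n r r' t) (hn : 3 ≤ n)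
    (hr : ‖2 * r‖ + n ≤ A) (hr' : ‖2 * r'‖ + n ≤ A) {σ : ℕ} (hσ : 4 * A ≤ σ) {B : ℝ}
    (hB : ∀ α α', α + α' = σ → ‖t α α'‖ ≤ B) {α α' : ℕ} (h : α + α' = σ + 2) :
    ‖t α α'‖ ≤ (1 + 8 * A / (σ + 1)) * B := by
  have hn' : (3 : ℝ) ≤ n := by exact_mod_cast hn
  have hA : 3 ≤ A := by linarith [norm_nonneg (2 * r)]
  have hσ' : 12 ≤ σ := by exact_mod_cast (show (12 : ℝ) ≤ σ by linarith)
  have hB0 : 0 ≤ B := (norm_nonneg _).trans (hB 0 σ (zero_add σ))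
  by_cases hzero : α < α' ∨ Odd (α + α')
  · rw [ht.1 α α' hzero, norm_zero]
    positivity
  rw [not_or, not_lt, Nat.not_odd_iff_even, h] at hzero
  obtain ⟨hle, heven⟩ := hzero
  have hσ_even : Even σ := (Nat.even_add.1 heven).2 even_two
  obtain ⟨p, rfl⟩ : ∃ p, α = p + 1 := ⟨α - 1, by omega⟩
  rcases α' with _ | q
  · obtain rfl : p = σ + 1 := by omega
    have hY := ht.norm_succ_succ_le hn hr hr' (p := σ) (q := 0) (Nat.zero_le σ) (by simpa)
      (by omega) (by linarith) (by simpa using hB)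
    have hZ : ‖t (σ + 1 - 1) 0‖ ≤ B := hB σ 0 (by omega)
    simpa using ht.norm_succ_zero_le hn hr hr' hσ_even.add_one (by push_cast; linarith)
      (by simpa using hY) hZ
  · have hσp : (σ : ℝ) ≤ 2 * p := by exact_mod_cast (show σ ≤ 2 * p by omega)
    have hσpq : σ = p + q := by omega
    have := ht.norm_succ_succ_le hn hr hr' (p := p) (q := q) (by omega) (hσpq ▸ hσ_even)
      (by omega) (by linarith) (fun β β' hβ ↦ hB β β' (by omega))
    rwa [show (σ : ℝ) = p + q by exact_mod_cast hσpq]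

end IsAdmissible

theorem statement10 (n : ℕ) (hn : 3 ≤ n) (r r' : ℂ) (t : ℕ → ℕ → ℂ)
    (ht : IsAdmissible n r r' t) :
    ∃ C : ℝ, 0 < C ∧ ∃ M : ℕ, ∀ α α' : ℕ, ‖t α α'‖ ≤ C * (1 + (α : ℝ))^M := by
  set A : ℕ := ⌈‖2 * r‖ + ‖2 * r'‖ + n⌉₊
  have hA : ‖2 * r‖ + ‖2 * r'‖ + n ≤ (A : ℝ) := Nat.le_ceil _
  set u : ℕ → ℝ := fun σ ↦ (antidiagonal σ).sup' ⟨(0, σ), by simp⟩ fun x ↦ ‖t x.1 x.2‖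
  have hu : ∀ α α', ‖t α α'‖ ≤ u (α + α') := fun α α' ↦
    le_sup' (fun x : ℕ × ℕ ↦ ‖t x.1 x.2‖) (b := (α, α')) (mem_antidiagonal.2 rfl)
  have hgrowth : ∀ σ ≥ 4 * A, u (σ + 2) ≤ (1 + 2 * (4 * A : ℕ) / (σ + 1)) * u σ := by
    intro σ hσ
    refine sup'_le _ _ fun x hx ↦ ?_
    refine (ht.norm_le_of_forall_antidiagonal hn (A := A) (by linarith [norm_nonneg (2 * r')])
      (by linarith [norm_nonneg (2 * r)]) (by exact_mod_cast hσ) (fun α α' h ↦ h ▸ hu α α')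
      (mem_antidiagonal.1 hx)).trans_eq ?_
    push_cast; ring
  obtain ⟨C, hC, hCu⟩ := exists_pow_bound_of_le_one_add_div hgrowth
  refine ⟨C * 2 ^ (4 * A), by positivity, 4 * A, fun α α' ↦ ?_⟩
  rcases lt_or_ge α α' with h | h
  · rw [ht.1 α α' (.inl h), norm_zero]
    positivity
  · have h' : (α' : ℝ) ≤ α := by exact_mod_cast h
    calc ‖t α α'‖ ≤ C * ((α + α' : ℕ) + 1) ^ (4 * A) := (hu α α').trans (hCu _)
      _ ≤ C * (2 * (1 + α)) ^ (4 * A) := by gcongr; push_cast; linarith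
      _ = _ := by rw [mul_pow]; ring

end
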